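/- arXiv:math/0210057 — 11 statements merged into one kernel-verified Lean document; each statement's English description precedes it below -/
import Mathlib

section
/- Let G be a group and let A₁, B₁, A₂, B₂ be subgroups with G = A₁B₁ and G = A₂B₂. If there exist an automorphism α of G and elements x, y ∈ G such that {A₁, B₁} = {A₂^{αx}, B₂^{αy}} (as unordered pairs, where exponents denote applying α followed by conjugation), then there exists an automorphism β of G with {A₁, B₁} = {A₂^β, B₂^β}. -/
open Pointwise

private lemma map_conj_self {G : Type*} [Group G] (H : Subgroup G) {c : G} (hc : c ∈ H) :
    H.map (MulAut.conj c).toMonoidHom = H := by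
  ext z
  simp only [Subgroup.mem_map, MulAut.conj_apply, MulEquiv.coe_toMonoidHom]
  constructor
  · rintro ⟨h, hh, rfl⟩
    exact mul_mem (mul_mem hc hh) (inv_mem hc)
  · intro hz
    exact ⟨c⁻¹ * z * c, by
      have := mul_mem (mul_mem (inv_mem hc) hz) hc
      simpa [mul_assoc] using this, by group⟩

private lemma map_conj_mul {G : Type*} [Group G] (H : Subgroup G) (u v : G) :
    H.map (MulAut.conj (u * v)).toMonoidHom =
      (H.map (MulAut.conj v).toMonoidHom).map (MulAut.conj u).toMonoidHom := by
  rw [Subgroup.map_map]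
  congr 1
  ext z
  simp [mul_assoc]

/-- Equivalent factorisations differ by a single automorphism: if
`{A₁, B₁} = {A₂^{αx}, B₂^{αy}}` for some automorphism `α` and `x, y ∈ G`,
then there is an automorphism `β` with `{A₁, B₁} = {A₂^β, B₂^β}`.
Here `H^{αg} = g⁻¹ · α(H) · g`. -/
theorem stmt_3 {G : Type*} [Group G] (A₁ B₁ A₂ B₂ : Subgroup G)
    (h1 : (A₁ : Set G) * (B₁ : Set G) = Set.univ)
    (h2 : (A₂ : Set G) * (B₂ : Set G) = Set.univ)
    (α : G ≃* G) (x y : G)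
    (hequiv : ({A₁, B₁} : Set (Subgroup G)) =
      {(A₂.map α.toMonoidHom).map (MulAut.conj x⁻¹).toMonoidHom,
       (B₂.map α.toMonoidHom).map (MulAut.conj y⁻¹).toMonoidHom}) :
    ∃ β : G ≃* G, ({A₁, B₁} : Set (Subgroup G)) = {A₂.map β.toMonoidHom, B₂.map β.toMonoidHom} := by
  -- obtain a ∈ A₂, b ∈ B₂ with a * b = α⁻¹ (x * y⁻¹)
  have hmem : α.symm (x * y⁻¹) ∈ (A₂ : Set G) * (B₂ : Set G) := by
    rw [h2]; trivial
  obtain ⟨a, ha, b, hb, hab⟩ := hmem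
  set c : G := x⁻¹ * α a with hc
  have hab' : a * b = α.symm (x * y⁻¹) := hab
  have hxy : α a * α b = x * y⁻¹ := by
    rw [← map_mul, hab']; simp
  have hc' : c = y⁻¹ * (α b)⁻¹ := by
    have hαb : α b = (α a)⁻¹ * (x * y⁻¹) := by
      rw [← hxy]; group
    rw [hc, hαb]; group
  refine ⟨α.trans (MulAut.conj c), ?_⟩
  have hcomp : ∀ H : Subgroup G,
      H.map (α.trans (MulAut.conj c)).toMonoidHom
        = (H.map α.toMonoidHom).map (MulAut.conj c).toMonoidHom := by
    intro H
    rw [Subgroup.map_map]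
    rfl
  have hA : A₂.map (α.trans (MulAut.conj c)).toMonoidHom
      = (A₂.map α.toMonoidHom).map (MulAut.conj x⁻¹).toMonoidHom := by
    have h0 : (A₂.map α.toMonoidHom).map (MulAut.conj (α a)).toMonoidHom
        = A₂.map α.toMonoidHom := map_conj_self _ (Subgroup.mem_map.2 ⟨a, ha, rfl⟩)
    rw [hcomp, hc, map_conj_mul, h0]
  have hB : B₂.map (α.trans (MulAut.conj c)).toMonoidHom
      = (B₂.map α.toMonoidHom).map (MulAut.conj y⁻¹).toMonoidHom := by
    have h0 : (B₂.map α.toMonoidHom).map (MulAut.conj (α b)⁻¹).toMonoidHom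
        = B₂.map α.toMonoidHom :=
      map_conj_self _ (inv_mem (Subgroup.mem_map.2 ⟨b, hb, rfl⟩))
    rw [hcomp, hc', map_conj_mul, h0]
  rw [hequiv, hA, hB]
end

section
/- Let M be a group and K₁, …, K_ℓ subgroups such that for every i, K_i · (⋂_{j ≠ i} K_j) = M. Then for any subsets I of {1,…,ℓ} and elements x₁, …, x_ℓ ∈ M, the intersection ⋂_{i ∈ I} K_i x_i of right cosets is a right coset of K_I = ⋂_{i ∈ I} K_i; in particular it is nonempty. -/
open Pointwise

lemma aux_mem_mul_singleton {M : Type*} [Group M] (s : Set M) (x y : M) :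
    y ∈ s * ({x} : Set M) ↔ y * x⁻¹ ∈ s := by
  constructor
  · rintro ⟨a, ha, b, hb, rfl⟩
    simp only [Set.mem_singleton_iff] at hb
    simpa [hb] using ha
  · intro h
    exact ⟨y * x⁻¹, h, x, rfl, by group⟩

lemma aux_coset_eq {M : Type*} [Group M] (K : Subgroup M) (x g : M)
    (hg : g ∈ (K : Set M) * {x}) : (K : Set M) * {x} = (K : Set M) * {g} := by
  rw [aux_mem_mul_singleton] at hg
  ext y
  rw [aux_mem_mul_singleton, aux_mem_mul_singleton]
  constructor
  · intro h
    have := mul_mem h (inv_mem hg)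
    simpa [mul_assoc] using this
  · intro h
    have := mul_mem h hg
    simpa [mul_assoc] using this

lemma aux_inter_coset {M : Type*} [Group M] (A B : Subgroup M) (g : M) :
    ((A : Set M) * {g}) ∩ ((B : Set M) * {g}) = ((A ⊓ B : Subgroup M) : Set M) * {g} := by
  ext y
  simp only [Set.mem_inter_iff, aux_mem_mul_singleton, Subgroup.mem_inf,
    Subgroup.coe_inf, Set.mem_inter_iff]

/-- In a Cartesian system, any intersection `⋂_{i ∈ I} K_i x_i` of right cosets is a
right coset of `K_I = ⋂_{i ∈ I} K_i`; in particular it is nonempty. -/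
theorem stmt_4 {M : Type*} [Group M] {ℓ : ℕ} (K : Fin ℓ → Subgroup M)
    (hcs : ∀ i, (K i : Set M) * ((⨅ j ∈ {j : Fin ℓ | j ≠ i}, K j : Subgroup M) : Set M)
      = Set.univ) :
    ∀ (I : Finset (Fin ℓ)) (x : Fin ℓ → M), ∃ m : M,
      (⋂ i ∈ I, (K i : Set M) * {x i})
        = ((⨅ i ∈ I, K i : Subgroup M) : Set M) * {m} := by
  intro I
  induction I using Finset.induction_on with
  | empty =>
      intro x
      refine ⟨1, ?_⟩
      simp
  | @insert a I ha ih =>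
      intro x
      obtain ⟨m, hm⟩ := ih x
      set H : Subgroup M := ⨅ i ∈ I, K i with hH
      -- K a * H = univ
      have hle : (⨅ j ∈ {j : Fin ℓ | j ≠ a}, K j : Subgroup M) ≤ H := by
        refine le_iInf fun i => le_iInf fun hi => ?_
        exact iInf₂_le i (by intro h; exact ha (h ▸ hi))
      have huniv : (K a : Set M) * (H : Set M) = Set.univ := by
        apply Set.eq_univ_of_univ_subset
        rw [← hcs a]
        exact Set.mul_subset_mul_left hle
      -- find common point g
      have hx : x a * m⁻¹ ∈ (K a : Set M) * (H : Set M) := by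
        rw [huniv]; trivial
      obtain ⟨k, hk, h, hh, hkh⟩ := hx
      set g : M := k⁻¹ * x a with hg
      have hg1 : g ∈ (K a : Set M) * {x a} := by
        rw [aux_mem_mul_singleton]
        simpa [hg] using inv_mem hk
      have hg2 : g ∈ (H : Set M) * {m} := by
        rw [aux_mem_mul_singleton]
        have : g * m⁻¹ = h := by
          rw [hg, mul_assoc, ← hkh]; group
        rw [this]; exact hh
      refine ⟨g, ?_⟩
      rw [Finset.set_biInter_insert, hm, aux_coset_eq (K a) (x a) g hg1,
        aux_coset_eq H m g hg2, aux_inter_coset]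
      congr 1
      simp [hH, iInf_insert]
end

section
/- Let M be a finite group and K₁, …, K_ℓ subgroups such that for every i, K_i · (⋂_{j ≠ i} K_j) = M. Then for any subset I of {1,…,ℓ}, the index |M : ⋂_{i ∈ I} K_i| equals ∏_{i ∈ I} |M : K_i|. -/
/-!
If `HK = G`, every left coset of `H` meets `K`, so `|K : H ∩ K| = |G : H|` and hence
`|G : H ∩ K| = |G : H| |G : K|`. For `i ∉ I` the Cartesian condition gives
`K_i K_I ⊇ K_i (⋂_{j ≠ i} K_j) = M`, so the formula follows by induction on `I`.
-/

open Pointwise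

namespace Subgroup

variable {G : Type*} [Group G] {H K : Subgroup G}

theorem relIndex_eq_index_of_mul_eq_univ (h : (H : Set G) * (K : Set G) = Set.univ) :
    H.relIndex K = H.index := by
  rw [← relIndex_top_right]
  refine Nat.card_eq_of_bijective (quotientSubgroupOfEmbeddingOfLE H le_top)
    ⟨(quotientSubgroupOfEmbeddingOfLE H le_top).injective, ?_⟩
  rintro ⟨g⟩
  obtain ⟨x, hx, y, hy, hxy⟩ : (g : G)⁻¹ ∈ (H : Set G) * K := h ▸ Set.mem_univ _
  refine ⟨QuotientGroup.mk ⟨y⁻¹, K.inv_mem hy⟩, QuotientGroup.eq.mpr ?_⟩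
  have hyg : y * g = x⁻¹ := by rw [← inv_inv (g : G), ← hxy]; group
  simpa [mem_subgroupOf, hyg] using H.inv_mem hx

theorem index_inf_of_mul_eq_univ (h : (H : Set G) * (K : Set G) = Set.univ) :
    (H ⊓ K).index = H.index * K.index := by
  have := relIndex_inf_mul_relIndex H K ⊤
  rwa [inf_top_eq, relIndex_top_right, relIndex_top_right,
    relIndex_eq_index_of_mul_eq_univ h, eq_comm] at this

end Subgroup

theorem stmt_5_general {M : Type*} [Group M] {ℓ : ℕ} (K : Fin ℓ → Subgroup M)
    (hcs : ∀ i, (K i : Set M) * ((⨅ j ∈ {j : Fin ℓ | j ≠ i}, K j : Subgroup M) : Set M)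
      = Set.univ) :
    ∀ I : Finset (Fin ℓ),
      (⨅ i ∈ I, K i : Subgroup M).index = ∏ i ∈ I, (K i).index := by
  intro I
  induction I using Finset.induction_on with
  | empty => simp
  | @insert i I hi ih =>
    rw [Finset.iInf_insert, Finset.prod_insert hi, ← ih]
    have hle : (⨅ j ∈ {j : Fin ℓ | j ≠ i}, K j : Subgroup M) ≤ ⨅ j ∈ I, K j :=
      le_iInf₂ fun j hj => iInf₂_le j fun hji : j = i => hi (hji ▸ hj)
    refine Subgroup.index_inf_of_mul_eq_univ (Set.eq_univ_of_univ_subset ?_)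
    exact hcs i ▸ Set.mul_subset_mul_left hle

/-- In a Cartesian system of a finite group, `|M : K_I| = ∏_{i ∈ I} |M : K_i|`. -/
theorem stmt_5 {M : Type*} [Group M] [Finite M] {ℓ : ℕ} (K : Fin ℓ → Subgroup M)
    (hcs : ∀ i, (K i : Set M) * ((⨅ j ∈ {j : Fin ℓ | j ≠ i}, K j : Subgroup M) : Set M)
      = Set.univ) :
    ∀ I : Finset (Fin ℓ),
      (⨅ i ∈ I, K i : Subgroup M).index = ∏ i ∈ I, (K i).index :=
  stmt_5_general K hcs
end

section
/- Let M be a finite group and K₁, …, K_ℓ subgroups such that for every i, K_i · (⋂_{j ≠ i} K_j) = M. Then for any subsets I, J of {1,…,ℓ}, K_I · K_J = K_{I ∩ J}, where K_S = ⋂_{i ∈ S} K_i. -/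
open Pointwise

/-- In a Cartesian system of a finite group, `K_I · K_J = K_{I ∩ J}` as subsets. -/
theorem stmt_6 {M : Type*} [Group M] [Finite M] {ℓ : ℕ} (K : Fin ℓ → Subgroup M)
    (hcs : ∀ i, (K i : Set M) * ((⨅ j ∈ {j : Fin ℓ | j ≠ i}, K j : Subgroup M) : Set M)
      = Set.univ) :
    ∀ I J : Finset (Fin ℓ),
      ((⨅ i ∈ I, K i : Subgroup M) : Set M) * ((⨅ i ∈ J, K i : Subgroup M) : Set M)
        = ((⨅ i ∈ I ∩ J, K i : Subgroup M) : Set M) := by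
  have key : ∀ n : ℕ, ∀ I J : Finset (Fin ℓ), (I \ J).card = n →
      ((⨅ i ∈ I ∩ J, K i : Subgroup M) : Set M) ⊆
        ((⨅ i ∈ I, K i : Subgroup M) : Set M) * ((⨅ i ∈ J, K i : Subgroup M) : Set M) := by
    intro n
    induction n with
    | zero =>
      intro I J h x hx
      have hIJ : I ⊆ J := by
        rw [Finset.card_eq_zero, Finset.sdiff_eq_empty_iff_subset] at h
        exact h
      have hI : I ∩ J = I := Finset.inter_eq_left.mpr hIJ
      rw [hI] at hx
      refine ⟨x, hx, 1, ?_, mul_one x⟩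
      simp only [SetLike.mem_coe, Subgroup.mem_iInf]
      exact fun i _ => one_mem _
    | succ n ih =>
      intro I J h x hx
      have hne : (I \ J).Nonempty := by rw [← Finset.card_pos, h]; omega
      obtain ⟨i, hi⟩ := hne
      have hiI : i ∈ I := (Finset.mem_sdiff.mp hi).1
      have hiJ : i ∉ J := (Finset.mem_sdiff.mp hi).2
      have hx' : x ∈ (K i : Set M) *
          ((⨅ j ∈ {j : Fin ℓ | j ≠ i}, K j : Subgroup M) : Set M) := by
        rw [hcs i]; trivial
      obtain ⟨a, ha, b, hb, hab⟩ := hx'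
      have hb' : ∀ j, j ≠ i → b ∈ K j := by
        simpa [Subgroup.mem_iInf] using hb
      have hxm : ∀ j ∈ I ∩ J, x ∈ K j := by
        simpa [Subgroup.mem_iInf] using hx
      have ham : a ∈ (⨅ j ∈ I ∩ insert i J, K j : Subgroup M) := by
        simp only [Subgroup.mem_iInf]
        intro j hj
        rcases Finset.mem_insert.mp (Finset.mem_inter.mp hj).2 with rfl | hjJ
        · exact ha
        · have hji : j ≠ i := fun hji => hiJ (hji ▸ hjJ)
          have : a = x * b⁻¹ := by rw [← hab]; group
          rw [this]
          exact mul_mem (hxm j (Finset.mem_inter.mpr ⟨(Finset.mem_inter.mp hj).1, hjJ⟩))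
            (inv_mem (hb' j hji))
      have hcard : (I \ insert i J).card = n := by
        have : I \ insert i J = (I \ J).erase i := by
          ext j
          simp only [Finset.mem_sdiff, Finset.mem_insert, Finset.mem_erase]
          tauto
        rw [this, Finset.card_erase_of_mem hi, h]
        omega
      obtain ⟨c, hc, d, hd, hcd⟩ := ih I (insert i J) hcard ham
      have hd' : ∀ j ∈ J, d ∈ K j := by
        have := (Subgroup.mem_iInf.mp (SetLike.mem_coe.mp hd))
        intro j hj
        have := Subgroup.mem_iInf.mp (this j) (Finset.mem_insert_of_mem hj)
        exact this
      have hcd' : c * d = a := hcd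
      have hab' : a * b = x := hab
      refine ⟨c, hc, d * b, ?_, show c * (d * b) = x by rw [← mul_assoc, hcd', hab']⟩
      simp only [SetLike.mem_coe, Subgroup.mem_iInf]
      intro j hj
      have hji : j ≠ i := fun hji => hiJ (hji ▸ hj)
      exact mul_mem (hd' j hj) (hb' j hji)
  intro I J
  apply Set.Subset.antisymm
  · rintro x ⟨a, ha, b, hb, rfl⟩
    simp only [SetLike.mem_coe, Subgroup.mem_iInf] at *
    intro j hj
    exact mul_mem (ha j (Finset.mem_inter.mp hj).1) (hb j (Finset.mem_inter.mp hj).2)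
  · exact key (I \ J).card I J rfl
end

section
/- Let M act transitively on a finite set Ω, let E = {Γ₁,…,Γ_ℓ} be a Cartesian decomposition of Ω with each Γᵢ an M-invariant partition, fix ω ∈ Ω, and let γᵢ ∈ Γᵢ with ω ∈ γᵢ. Then for each i, M_{γᵢ} · (⋂_{j≠i} M_{γⱼ}) = M; that is, the setwise stabilisers {M_{γ₁},…,M_{γ_ℓ}} form a Cartesian system of subgroups of M with respect to ω. -/
open Pointwise

/-- For an invariant Cartesian decomposition `{Γ₁,…,Γ_ℓ}` of `Ω` and blocks `γᵢ ∈ Γᵢ`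
containing `ω`, the setwise stabilisers satisfy `M_{γᵢ} · (⋂_{j≠i} M_{γⱼ}) = M`,
so `{M_{γ₁},…,M_{γ_ℓ}}` is a Cartesian system with respect to `ω`. -/
theorem stmt_9 {M Ω : Type*} [Group M] [MulAction M Ω] [Finite Ω] [FaithfulSMul M Ω]
    (htrans : MulAction.IsPretransitive M Ω) {ℓ : ℕ} (Γ : Fin ℓ → Set (Set Ω))
    (hpart : ∀ i, Setoid.IsPartition (Γ i))
    (hinv : ∀ (m : M) (i : Fin ℓ), ∀ b ∈ Γ i, m • b ∈ Γ i)
    (hcart : ∀ δ : Fin ℓ → Set Ω, (∀ i, δ i ∈ Γ i) → ∃! x : Ω, x ∈ ⋂ i, δ i)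
    (ω : Ω) (γ : Fin ℓ → Set Ω) (hγ : ∀ i, γ i ∈ Γ i) (hω : ∀ i, ω ∈ γ i) :
    ∀ i, (MulAction.stabilizer M (γ i) : Set M) *
      ((⨅ j ∈ {j : Fin ℓ | j ≠ i}, MulAction.stabilizer M (γ j) : Subgroup M) : Set M)
        = Set.univ := by
  intro i
  classical
  ext g
  simp only [Set.mem_univ, iff_true]
  set δ : Fin ℓ → Set Ω := fun j => if j = i then g⁻¹ • γ i else γ j with hδ
  have hδΓ : ∀ j, δ j ∈ Γ j := by
    intro j
    by_cases h : j = i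
    · subst h; simpa [hδ] using hinv g⁻¹ j (γ j) (hγ j)
    · simpa [hδ, h] using hγ j
  obtain ⟨x, hx, -⟩ := hcart δ hδΓ
  have hxδ : ∀ j, x ∈ δ j := by simpa [Set.mem_iInter] using hx
  obtain ⟨b, hb⟩ := htrans.exists_smul_eq ω x
  -- blocks of Γ j containing x are unique
  have huniq : ∀ j (c c' : Set Ω), c ∈ Γ j → c' ∈ Γ j → x ∈ c → x ∈ c' → c = c' := by
    intro j c c' hc hc' hxc hxc'
    obtain ⟨d, -, hd⟩ := (hpart j).2 x
    have h1 := hd c ⟨hc, hxc⟩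
    have h2 := hd c' ⟨hc', hxc'⟩
    rw [h1, h2]
  have key : ∀ j, b • γ j = δ j := by
    intro j
    refine huniq j _ _ (hinv b j (γ j) (hγ j)) (hδΓ j) ?_ (hxδ j)
    exact ⟨ω, hω j, hb⟩
  have hbmem : b ∈ (⨅ j ∈ {j : Fin ℓ | j ≠ i}, MulAction.stabilizer M (γ j) : Subgroup M) := by
    simp only [Subgroup.mem_iInf]
    intro j hj
    have hj' : j ≠ i := hj
    have := key j
    rw [hδ] at this
    simp only [if_neg hj'] at this
    exact this
  have hgb : g * b ∈ MulAction.stabilizer M (γ i) := by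
    have := key i
    simp only [hδ, if_pos rfl] at this
    rw [MulAction.mem_stabilizer_iff, mul_smul, this, smul_smul, mul_inv_cancel, one_smul]
  exact ⟨g * b, hgb, b⁻¹, inv_mem hbmem, by group⟩
end

section
/- Let M be a group acting transitively on a finite set Ω, ω ∈ Ω, and let {K₁,…,K_ℓ} be a Cartesian system of subgroups of M with respect to ω. For each i, let Γᵢ be the M-invariant partition of Ω consisting of the M-translates of the orbit ω·Kᵢ. Then {Γ₁,…,Γ_ℓ} is a Cartesian decomposition of Ω: for all choices of blocks δᵢ ∈ Γᵢ, |δ₁ ∩ ⋯ ∩ δ_ℓ| = 1. -/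
open Pointwise

lemma cartesian_coset_inter {M : Type*} [Group M] {ℓ : ℕ} (K : Fin ℓ → Subgroup M)
    (hcs : ∀ i, (K i : Set M) * ((⨅ j ∈ {j : Fin ℓ | j ≠ i}, K j : Subgroup M) : Set M)
      = Set.univ) (m : Fin ℓ → M) (s : Finset (Fin ℓ)) :
    ∃ g : M, ∀ i ∈ s, (m i)⁻¹ * g ∈ K i := by
  classical
  induction s using Finset.induction with
  | empty => exact ⟨1, by simp⟩
  | @insert a s ha ih =>
    obtain ⟨g, hg⟩ := ih
    have hmem : (m a)⁻¹ * g ∈ (K a : Set M) *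
        ((⨅ j ∈ {j : Fin ℓ | j ≠ a}, K j : Subgroup M) : Set M) := by
      rw [hcs a]; trivial
    obtain ⟨k, hk, l, hl, hkl⟩ := hmem
    have hlK : ∀ i, i ≠ a → l ∈ K i := by
      simpa [Subgroup.mem_iInf] using hl
    refine ⟨g * l⁻¹, ?_⟩
    intro i hi
    rcases Finset.mem_insert.mp hi with rfl | hi
    · have hkl' : k * l = (m i)⁻¹ * g := hkl
      have : (m i)⁻¹ * (g * l⁻¹) = k := by
        rw [← mul_assoc, ← hkl']; group
      rw [this]; exact hk
    · have hia : i ≠ a := fun h => ha (h ▸ hi)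
      have : (m i)⁻¹ * (g * l⁻¹) = ((m i)⁻¹ * g) * l⁻¹ := by group
      rw [this]
      exact mul_mem (hg i hi) (inv_mem (hlK i hia))

/-- From a Cartesian system `{K₁,…,K_ℓ}` with respect to `ω`, the `M`-translates of the
orbits `ω·Kᵢ` form partitions `Γᵢ` constituting a Cartesian decomposition: every
transversal intersection of blocks contains exactly one point. -/
theorem stmt_10 {M Ω : Type*} [Group M] [MulAction M Ω] [Finite Ω]
    (htrans : MulAction.IsPretransitive M Ω) {ℓ : ℕ} (K : Fin ℓ → Subgroup M) (ω : Ω)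
    (hstab : (⨅ i, K i) = MulAction.stabilizer M ω)
    (hcs : ∀ i, (K i : Set M) * ((⨅ j ∈ {j : Fin ℓ | j ≠ i}, K j : Subgroup M) : Set M)
      = Set.univ) :
    ∀ δ : Fin ℓ → Set Ω,
      (∀ i, ∃ m : M, δ i = m • MulAction.orbit (K i) ω) →
      ∃! x : Ω, x ∈ ⋂ i, δ i := by
  intro δ hδ
  choose m hm using hδ
  have hstabK : ∀ i, MulAction.stabilizer M ω ≤ K i := by
    intro i
    rw [← hstab]
    exact iInf_le _ i
  -- membership characterization
  have hmemδ : ∀ i (x : Ω), x ∈ δ i ↔ ∃ g : M, (m i)⁻¹ * g ∈ K i ∧ g • ω = x := by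
    intro i x
    rw [hm i]
    constructor
    · rintro ⟨y, hy, rfl⟩
      obtain ⟨k, hk⟩ := MulAction.mem_orbit_iff.mp hy
      refine ⟨m i * (k : M), by simp [mul_assoc, k.2], ?_⟩
      show (m i * (k : M)) • ω = m i • y
      rw [mul_smul]
      exact congrArg _ hk
    · rintro ⟨g, hg, rfl⟩
      refine ⟨((m i)⁻¹ * g) • ω, MulAction.mem_orbit_iff.mpr ⟨⟨_, hg⟩, rfl⟩, ?_⟩
      show m i • ((m i)⁻¹ * g) • ω = g • ω
      rw [← mul_smul]
      simp
  -- existence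
  obtain ⟨g, hg⟩ := cartesian_coset_inter K hcs m Finset.univ
  refine ⟨g • ω, ?_, ?_⟩
  · exact Set.mem_iInter.mpr fun i =>
      (hmemδ i _).mpr ⟨g, hg i (Finset.mem_univ i), rfl⟩
  · -- uniqueness
    intro y hy
    rw [Set.mem_iInter] at hy
    obtain ⟨h, rfl⟩ := htrans.exists_smul_eq ω y
    -- for each i, (m i)⁻¹ * h ∈ K i
    have hh : ∀ i, (m i)⁻¹ * h ∈ K i := by
      intro i
      obtain ⟨g', hg', hg'ω⟩ := (hmemδ i _).mp (hy i)
      have hs : g'⁻¹ * h ∈ MulAction.stabilizer M ω := by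
        rw [MulAction.mem_stabilizer_iff, mul_smul, ← hg'ω, inv_smul_smul]
      have : (m i)⁻¹ * h = ((m i)⁻¹ * g') * (g'⁻¹ * h) := by group
      rw [this]
      exact mul_mem hg' (hstabK i hs)
    have : h⁻¹ * g ∈ MulAction.stabilizer M ω := by
      rw [← hstab, Subgroup.mem_iInf]
      intro i
      have : h⁻¹ * g = ((m i)⁻¹ * h)⁻¹ * ((m i)⁻¹ * g) := by group
      rw [this]
      exact mul_mem (inv_mem (hh i)) (hg i (Finset.mem_univ i))
    have := MulAction.mem_stabilizer_iff.mp this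
    rw [mul_smul] at this
    calc h • ω = h • (h⁻¹ • g • ω) := by rw [this]
    _ = g • ω := by simp
end

section
/- Let G be a group acting transitively on a finite set Ω with a transitive normal subgroup M, fix ω ∈ Ω, let E = {Γ₁,…,Γ_ℓ} be a G-invariant Cartesian decomposition of Ω with each Γᵢ also M-invariant, and let Kᵢ = M_{γᵢ} where γᵢ ∈ Γᵢ contains ω. Then the set {K₁,…,K_ℓ} is invariant under conjugation by G_ω, and for g ∈ G_ω, Γᵢ^g = Γⱼ if and only if Kᵢ^g = Kⱼ. -/
open Pointwise

/-- For a `G`-invariant Cartesian decomposition `{Γ₁,…,Γ_ℓ}` with transitive normal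
subgroup `M`, and `Kᵢ = M_{γᵢ}` (the stabiliser in `M` of the block `γᵢ` of `Γᵢ`
containing `ω`), the set `{K₁,…,K_ℓ}` is invariant under conjugation by `G_ω`, and
for `g ∈ G_ω` we have `Γᵢ^g = Γⱼ` if and only if `Kᵢ^g = Kⱼ`. -/
theorem stmt_11 {G Ω : Type*} [Group G] [MulAction G Ω] [Finite Ω]
    (M : Subgroup G) (hnorm : M.Normal)
    (hMtrans : ∀ x y : Ω, ∃ m ∈ M, m • x = y)
    {ℓ : ℕ} (Γ : Fin ℓ → Set (Set Ω))
    (hpart : ∀ i, Setoid.IsPartition (Γ i))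
    (hMinv : ∀ m ∈ M, ∀ (i : Fin ℓ), ∀ b ∈ Γ i, m • b ∈ Γ i)
    (hcart : ∀ δ : Fin ℓ → Set Ω, (∀ i, δ i ∈ Γ i) → ∃! x : Ω, x ∈ ⋂ i, δ i)
    (hGinv : ∀ g : G, ∀ i : Fin ℓ, ∃ j : Fin ℓ, (fun B => g • B) '' (Γ i) = Γ j)
    (ω : Ω) (γ : Fin ℓ → Set Ω) (hγ : ∀ i, γ i ∈ Γ i) (hω : ∀ i, ω ∈ γ i)
    (K : Fin ℓ → Subgroup G)
    (hK : ∀ i, K i = MulAction.stabilizer G (γ i) ⊓ M) :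
    (∀ g ∈ MulAction.stabilizer G ω, ∀ i : Fin ℓ, ∃ j : Fin ℓ,
        (K i).map (MulAut.conj g).toMonoidHom = K j) ∧
    (∀ g ∈ MulAction.stabilizer G ω, ∀ i j : Fin ℓ,
        ((fun B => g • B) '' (Γ i) = Γ j ↔
          (K i).map (MulAut.conj g).toMonoidHom = K j)) := by
  -- the block of `Γ j` containing `ω` is `γ j`
  have hblock : ∀ (j : Fin ℓ) (b : Set Ω), b ∈ Γ j → ω ∈ b → b = γ j := by
    intro j b hb hωb
    obtain ⟨c, _, huniq⟩ := (hpart j).2 ω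
    rw [huniq b ⟨hb, hωb⟩, huniq (γ j) ⟨hγ j, hω j⟩]
  -- blocks of `Γ j` through any point are unique
  have hblock' : ∀ (j : Fin ℓ) (x : Ω) (b c : Set Ω), b ∈ Γ j → x ∈ b →
      c ∈ Γ j → x ∈ c → b = c := by
    intro j x b c hb hxb hc hxc
    obtain ⟨d, _, huniq⟩ := (hpart j).2 x
    rw [huniq b ⟨hb, hxb⟩, huniq c ⟨hc, hxc⟩]
  -- membership in `K j`
  have hmemK : ∀ (j : Fin ℓ) (m : G), m ∈ K j ↔ m • γ j = γ j ∧ m ∈ M := by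
    intro j m
    rw [hK j, Subgroup.mem_inf, MulAction.mem_stabilizer_iff]
  -- `γ` is determined by `K`
  have hγeq : ∀ j j' : Fin ℓ, K j ≤ K j' → γ j ⊆ γ j' := by
    intro j j' h x hx
    obtain ⟨m, hm, hmx⟩ := hMtrans ω x
    have h1 : m • γ j ∈ Γ j := hMinv m hm j (γ j) (hγ j)
    have h2 : x ∈ m • γ j := ⟨ω, hω j, hmx⟩
    have h3 : m • γ j = γ j := hblock' j x (m • γ j) (γ j) h1 h2 (hγ j) hx
    have h4 : m ∈ K j' := h ((hmemK j m).2 ⟨h3, hm⟩)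
    have h5 : m • γ j' = γ j' := ((hmemK j' m).1 h4).1
    rw [← hmx, ← h5]
    exact ⟨ω, hω j', rfl⟩
  -- `Γ` is determined by `γ`
  have hΓeq : ∀ j j' : Fin ℓ, γ j = γ j' → Γ j ⊆ Γ j' := by
    intro j j' h b hb
    obtain ⟨x, hx⟩ : b.Nonempty := by
      rcases Set.eq_empty_or_nonempty b with h0 | h0
      · exact absurd (h0 ▸ hb) (hpart j).1
      · exact h0
    obtain ⟨m, hm, hmx⟩ := hMtrans ω x
    have h1 : m • γ j ∈ Γ j := hMinv m hm j (γ j) (hγ j)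
    have h2 : x ∈ m • γ j := ⟨ω, hω j, hmx⟩
    have h3 : b = m • γ j := hblock' j x b (m • γ j) hb hx h1 h2
    rw [h3, h]
    exact hMinv m hm j' (γ j') (hγ j')
  -- conjugation formula
  have hKconj : ∀ (g : G) (i : Fin ℓ),
      (K i).map (MulAut.conj g).toMonoidHom = MulAction.stabilizer G (g • γ i) ⊓ M := by
    intro g i
    have hM : M.map (MulAut.conj g).toMonoidHom = M := by
      ext x
      simp only [Subgroup.mem_map, MulEquiv.coe_toMonoidHom, MulAut.conj_apply]
      constructor
      · rintro ⟨y, hy, rfl⟩; exact hnorm.conj_mem y hy g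
      · intro hx
        exact ⟨g⁻¹ * x * g, by simpa using hnorm.conj_mem x hx g⁻¹, by group⟩
    rw [hK i, Subgroup.map_inf _ _ _ (MulAut.conj g).injective, hM,
      MulAction.stabilizer_smul_eq_stabilizer_map_conj]
  -- moving blocks through ω
  have hγsmul : ∀ g ∈ MulAction.stabilizer G ω, ∀ i j : Fin ℓ,
      (fun B => g • B) '' (Γ i) = Γ j → g • γ i = γ j := by
    intro g hg i j hij
    refine hblock j _ ?_ ?_
    · rw [← hij]; exact ⟨γ i, hγ i, rfl⟩
    · exact ⟨ω, hω i, hg⟩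
  have fwd : ∀ g ∈ MulAction.stabilizer G ω, ∀ i j : Fin ℓ,
      (fun B => g • B) '' (Γ i) = Γ j →
      (K i).map (MulAut.conj g).toMonoidHom = K j := by
    intro g hg i j hij
    rw [hKconj, hγsmul g hg i j hij, hK j]
  refine ⟨?_, ?_⟩
  · intro g hg i
    obtain ⟨j, hj⟩ := hGinv g i
    exact ⟨j, fwd g hg i j hj⟩
  · intro g hg i j
    refine ⟨fwd g hg i j, fun h => ?_⟩
    obtain ⟨j', hj'⟩ := hGinv g i
    have hKj : K j' = K j := by rw [← fwd g hg i j' hj', h]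
    have hγj : γ j' = γ j :=
      Set.Subset.antisymm (hγeq j' j hKj.le) (hγeq j j' hKj.ge)
    have hΓ : Γ j' = Γ j := Set.Subset.antisymm (hΓeq j' j hγj) (hΓeq j j' hγj.symm)
    rw [hj', hΓ]
end

section
/- Let G act transitively on a finite set Ω, and suppose G has a transitive minimal normal subgroup M. Then for any fixed ω ∈ Ω, the map sending a G-invariant Cartesian decomposition E of Ω (whose partitions are each M-invariant) to the Cartesian system {M_γ : γ ∈ Γ, ω ∈ γ, Γ ∈ E} is injective: two G-invariant Cartesian decompositions with equal associated Cartesian systems at ω are equal. -/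
open Pointwise

variable (G : Type*) (Ω : Type*) [Group G] [MulAction G Ω]

/-- `E` is a `G`-invariant Cartesian decomposition of `Ω` each of whose partitions is
`M`-invariant: every `Γ ∈ E` is a partition of `Ω` stabilised blockwise-setwise by `M`,
every transversal choice of blocks meets in exactly one point, and `G` permutes the
partitions in `E`. -/
def IsCartesianDecomposition (M : Subgroup G) (E : Set (Set (Set Ω))) : Prop :=
  (∀ Γ ∈ E, Setoid.IsPartition Γ) ∧
  (∀ Γ ∈ E, ∀ m ∈ M, ∀ b ∈ Γ, m • b ∈ Γ) ∧
  (∀ c : Set (Set Ω) → Set Ω, (∀ Γ ∈ E, c Γ ∈ Γ) → ∃! x : Ω, ∀ Γ ∈ E, x ∈ c Γ) ∧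
  (∀ g : G, ∀ Γ ∈ E, (fun B => g • B) '' Γ ∈ E)

/-- The Cartesian system associated to `E` at the point `ω`: the setwise stabilisers in
`M` of the blocks through `ω`. -/
def cartesianSystemAt (M : Subgroup G) (E : Set (Set (Set Ω))) (ω : Ω) : Set (Subgroup G) :=
  {K | ∃ Γ ∈ E, ∃ γ ∈ Γ, ω ∈ γ ∧ K = MulAction.stabilizer G γ ⊓ M}

lemma block_eq_orbit {G Ω : Type*} [Group G] [MulAction G Ω] {M : Subgroup G}
    (hMtrans : ∀ x y : Ω, ∃ m ∈ M, m • x = y)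
    {Γ : Set (Set Ω)} (hpart : Setoid.IsPartition Γ)
    (hinv : ∀ m ∈ M, ∀ b ∈ Γ, m • b ∈ Γ)
    {γ : Set Ω} (hγ : γ ∈ Γ) {ω : Ω} (hω : ω ∈ γ) :
    γ = {x | ∃ m ∈ MulAction.stabilizer G γ ⊓ M, m • ω = x} := by
  ext x
  constructor
  · intro hx
    obtain ⟨m, hm, hmx⟩ := hMtrans ω x
    refine ⟨m, ⟨?_, hm⟩, hmx⟩
    have h1 : m • γ ∈ Γ := hinv m hm γ hγ
    have hx1 : x ∈ m • γ := ⟨ω, hω, hmx⟩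
    obtain ⟨b, ⟨hbΓ, hxb⟩, huniq⟩ := hpart.2 x
    exact (huniq _ ⟨h1, hx1⟩).trans (huniq _ ⟨hγ, hx⟩).symm
  · rintro ⟨m, ⟨hms, hmM⟩, rfl⟩
    have hmγ : m • γ = γ := hms
    rw [← hmγ]
    exact ⟨ω, hω, rfl⟩

lemma partition_eq_orbit {G Ω : Type*} [Group G] [MulAction G Ω] {M : Subgroup G}
    (hMtrans : ∀ x y : Ω, ∃ m ∈ M, m • x = y)
    {Γ : Set (Set Ω)} (hpart : Setoid.IsPartition Γ)
    (hinv : ∀ m ∈ M, ∀ b ∈ Γ, m • b ∈ Γ)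
    {γ : Set Ω} (hγ : γ ∈ Γ) {ω : Ω} (hω : ω ∈ γ) :
    Γ = {b | ∃ m ∈ M, b = m • γ} := by
  ext b
  constructor
  · intro hb
    have hne : b ≠ ∅ := fun h => hpart.1 (h ▸ hb)
    obtain ⟨x, hx⟩ := Set.nonempty_iff_ne_empty.mpr hne
    obtain ⟨m, hm, hmx⟩ := hMtrans ω x
    refine ⟨m, hm, ?_⟩
    have h1 : m • γ ∈ Γ := hinv m hm γ hγ
    obtain ⟨c, _, huniq⟩ := hpart.2 x
    exact (huniq b ⟨hb, hx⟩).trans (huniq _ ⟨h1, ⟨ω, hω, hmx⟩⟩).symm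
  · rintro ⟨m, hm, rfl⟩
    exact hinv m hm γ hγ

/-- The map sending a `G`-invariant Cartesian decomposition to its Cartesian system at a
fixed point `ω` is injective. -/
theorem stmt_12 [Finite Ω] [FaithfulSMul G Ω]
    (hGtrans : MulAction.IsPretransitive G Ω)
    (M : Subgroup G) (hnorm : M.Normal) (hbot : M ≠ ⊥)
    (hmin : ∀ N : Subgroup G, N.Normal → N ≤ M → N = ⊥ ∨ N = M)
    (hMtrans : ∀ x y : Ω, ∃ m ∈ M, m • x = y)
    (ω : Ω) (E₁ E₂ : Set (Set (Set Ω)))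
    (hE₁ : IsCartesianDecomposition G Ω M E₁)
    (hE₂ : IsCartesianDecomposition G Ω M E₂)
    (hsys : cartesianSystemAt G Ω M E₁ ω = cartesianSystemAt G Ω M E₂ ω) :
    E₁ = E₂ := by
  have key : ∀ F₁ F₂ : Set (Set (Set Ω)), IsCartesianDecomposition G Ω M F₁ →
      IsCartesianDecomposition G Ω M F₂ →
      cartesianSystemAt G Ω M F₁ ω ⊆ cartesianSystemAt G Ω M F₂ ω → F₁ ⊆ F₂ := by
    intro F₁ F₂ h1 h2 hsub Γ hΓ
    obtain ⟨γ, ⟨hγ, hωγ⟩, _⟩ := (h1.1 Γ hΓ).2 ω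
    have hK : MulAction.stabilizer G γ ⊓ M ∈ cartesianSystemAt G Ω M F₁ ω :=
      ⟨Γ, hΓ, γ, hγ, hωγ, rfl⟩
    obtain ⟨Γ', hΓ', γ', hγ', hωγ', hKeq⟩ := hsub hK
    have hγγ' : γ = γ' := by
      rw [block_eq_orbit hMtrans (h1.1 Γ hΓ) (h1.2.1 Γ hΓ) hγ hωγ,
          block_eq_orbit hMtrans (h2.1 Γ' hΓ') (h2.2.1 Γ' hΓ') hγ' hωγ', ← hKeq]
    rw [partition_eq_orbit hMtrans (h1.1 Γ hΓ) (h1.2.1 Γ hΓ) hγ hωγ, hγγ',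
      ← partition_eq_orbit hMtrans (h2.1 Γ' hΓ') (h2.2.1 Γ' hΓ') hγ' hωγ']
    exact hΓ'
  exact le_antisymm (key E₁ E₂ hE₁ hE₂ hsys.le) (key E₂ E₁ hE₂ hE₁ hsys.ge)
end

section
/- Let T = A₆, and let A, B be two subgroups of T isomorphic to A₅ lying in the two distinct conjugacy classes of A₅-subgroups, with AB = T. Then A ∩ B is self-normalising in T, i.e. N_T(A ∩ B) = A ∩ B. -/
open Pointwise

namespace Stmt14Aux

abbrev T := alternatingGroup (Fin 6)

def σp : Equiv.Perm (Fin 6) := c[0, 1, 2, 3, 4]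

lemma hσsign : Equiv.Perm.sign σp = 1 := by decide

def σ : T := ⟨σp, Equiv.Perm.mem_alternatingGroup.mpr hσsign⟩

set_option maxRecDepth 10000 in
lemma hσ5 : σ ^ 5 = 1 := by
  apply Subtype.ext
  show σp ^ 5 = 1
  decide

lemma hσne : σ ≠ 1 := by
  intro h
  have : σp = 1 := congrArg Subtype.val h
  exact absurd this (by decide)

lemma horder : orderOf σ = 5 :=
  orderOf_eq_prime (hp := ⟨by norm_num⟩) hσ5 hσne

lemma coe_pow (x : T) (k : ℕ) : ((x ^ k : T) : Equiv.Perm (Fin 6)) = (x : Equiv.Perm (Fin 6)) ^ k := rfl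

-- membership characterization for the normalizer of ⟨σ⟩
lemma key (n : T) :
    n ∈ (Subgroup.normalizer ((Subgroup.zpowers σ : Subgroup T) : Set T)) ↔
      (n : Equiv.Perm (Fin 6)) * σp * (n : Equiv.Perm (Fin 6))⁻¹ ∈
        ({σp, σp^2, σp^3, σp^4} : Finset (Equiv.Perm (Fin 6))) := by
  constructor
  · intro hn
    have h1 : n * σ * n⁻¹ ∈ Subgroup.zpowers σ :=
      (Subgroup.mem_normalizer_iff.mp hn σ).mp (Subgroup.mem_zpowers σ)
    obtain ⟨k, hk⟩ := Submonoid.mem_powers_iff _ _ |>.mp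
      (mem_powers_iff_mem_zpowers.mpr h1)
    rw [← pow_mod_orderOf, horder] at hk
    have hval : (n : Equiv.Perm (Fin 6)) * σp * (n : Equiv.Perm (Fin 6))⁻¹
        = σp ^ (k % 5) := by
      have := congrArg Subtype.val hk
      simpa [coe_pow, σ] using this.symm
    have hk5 : k % 5 < 5 := Nat.mod_lt _ (by norm_num)
    interval_cases h : k % 5 <;> rw [hval]
    · exfalso
      apply hσne
      apply Subtype.ext
      have : (n : Equiv.Perm (Fin 6)) * σp * (n : Equiv.Perm (Fin 6))⁻¹ = 1 := by
        simpa using hval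
      have h2 : σp = 1 := by
        have := congrArg (fun z => (n : Equiv.Perm (Fin 6))⁻¹ * z * (n : Equiv.Perm (Fin 6))) this
        simpa [mul_assoc] using this
      exact h2
    all_goals simp [pow_succ]
  · intro hmem
    have hconj : ∃ j : ℕ, n * σ * n⁻¹ = σ ^ j := by
      simp only [Finset.mem_insert, Finset.mem_singleton] at hmem
      rcases hmem with h | h | h | h
      · exact ⟨1, Subtype.ext (by simpa [σ] using h)⟩
      · exact ⟨2, Subtype.ext (by simpa [coe_pow, σ] using h)⟩
      · exact ⟨3, Subtype.ext (by simpa [coe_pow, σ] using h)⟩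
      · exact ⟨4, Subtype.ext (by simpa [coe_pow, σ] using h)⟩
    obtain ⟨j, hj⟩ := hconj
    apply Subgroup.mem_normalizer_fintype
    intro y hy
    obtain ⟨k, hk⟩ := Subgroup.mem_zpowers_iff.mp hy
    have : n * y * n⁻¹ = (n * σ * n⁻¹) ^ k := by
      rw [← hk, conj_zpow]
    rw [this, hj, ← zpow_natCast, ← zpow_mul]
    exact Subgroup.zpow_mem _ (Subgroup.mem_zpowers σ) _

end Stmt14Aux
namespace Stmt14Aux

set_option maxRecDepth 10000 in
lemma count10 : (Finset.univ.filter (fun g : Equiv.Perm (Fin 6) =>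
    Equiv.Perm.sign g = 1 ∧ g * σp * g⁻¹ ∈
      ({σp, σp^2, σp^3, σp^4} : Finset (Equiv.Perm (Fin 6))))).card = 10 := by decide

lemma cardNormalizer : Nat.card ((Subgroup.normalizer ((Subgroup.zpowers σ : Subgroup T) : Set T))) = 10 := by
  have e : ((Subgroup.normalizer ((Subgroup.zpowers σ : Subgroup T) : Set T)) : Type) ≃
      {g : Equiv.Perm (Fin 6) // Equiv.Perm.sign g = 1 ∧ g * σp * g⁻¹ ∈
        ({σp, σp^2, σp^3, σp^4} : Finset (Equiv.Perm (Fin 6)))} :=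
    { toFun := fun n => ⟨n.1.1, Equiv.Perm.mem_alternatingGroup.mp n.1.2, (key n.1).mp n.2⟩
      invFun := fun g => ⟨⟨g.1, Equiv.Perm.mem_alternatingGroup.mpr g.2.1⟩,
        (key _).mpr g.2.2⟩
      left_inv := fun n => rfl
      right_inv := fun g => rfl }
  rw [Nat.card_congr e, Nat.card_eq_fintype_card, Fintype.card_subtype, ← count10]

end Stmt14Aux
namespace Stmt14Aux

lemma mul_univ_card {G : Type*} [Group G] [Finite G] (A B : Subgroup G)
    (h : (A : Set G) * (B : Set G) = Set.univ) :
    Nat.card A * Nat.card B = Nat.card G * Nat.card ↥(A ⊓ B) := by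
  classical
  cases nonempty_fintype G
  set f : A × B → G := fun p => (p.1 : G) * (p.2 : G) with hf
  have hsurj : Function.Surjective f := by
    intro g
    have hg : g ∈ (A : Set G) * (B : Set G) := h ▸ Set.mem_univ g
    obtain ⟨a, ha, b, hb, rfl⟩ := hg
    exact ⟨(⟨a, ha⟩, ⟨b, hb⟩), rfl⟩
  have fiber : ∀ g : G, Nat.card {p : A × B // f p = g} = Nat.card ↥(A ⊓ B) := by
    intro g
    obtain ⟨⟨a0, b0⟩, hab⟩ := hsurj g
    have toMem : ∀ x : ↥(A ⊓ B), ((a0 : G) * x ∈ A) ∧ ((x : G)⁻¹ * b0 ∈ B) := by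
      intro x
      obtain ⟨hxA, hxB⟩ := Subgroup.mem_inf.mp x.2
      exact ⟨mul_mem a0.2 hxA, mul_mem (inv_mem hxB) b0.2⟩
    refine Nat.card_congr (Equiv.symm ?_)
    refine
      { toFun := fun x =>
          ⟨(⟨(a0 : G) * x, (toMem x).1⟩, ⟨(x : G)⁻¹ * b0, (toMem x).2⟩),
            by
              show ((a0 : G) * x) * ((x : G)⁻¹ * b0) = g
              rw [show ((a0:G) * x) * ((x:G)⁻¹ * (b0:G)) = (a0:G) * (b0:G) by group]
              exact hab⟩
        invFun := fun p =>
          ⟨(a0 : G)⁻¹ * (p.1.1 : G), by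
            have h1 : (a0 : G) * (b0 : G) = (p.1.1 : G) * (p.1.2 : G) := by
              rw [show (p.1.1 : G) * (p.1.2 : G) = f p.1 from rfl, p.2]
              exact hab
            have hB : (a0 : G)⁻¹ * (p.1.1 : G) ∈ B := by
              have h2 : (a0 : G)⁻¹ * (p.1.1 : G) = (b0 : G) * (p.1.2 : G)⁻¹ := by
                rw [eq_comm, mul_inv_eq_iff_eq_mul, mul_assoc, ← h1]
                group
              rw [h2]
              exact mul_mem b0.2 (inv_mem p.1.2.2)
            exact Subgroup.mem_inf.mpr ⟨mul_mem (inv_mem a0.2) p.1.1.2, hB⟩⟩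
        left_inv := fun x => by
          apply Subtype.ext
          show (a0 : G)⁻¹ * ((a0 : G) * x) = (x : G)
          group
        right_inv := fun p => by
          have h1 : (a0 : G) * (b0 : G) = (p.1.1 : G) * (p.1.2 : G) := by
            rw [show (p.1.1 : G) * (p.1.2 : G) = f p.1 from rfl, p.2]
            exact hab
          apply Subtype.ext
          apply Prod.ext <;> apply Subtype.ext
          · show (a0 : G) * ((a0 : G)⁻¹ * (p.1.1 : G)) = (p.1.1 : G)
            group
          · show ((a0 : G)⁻¹ * (p.1.1 : G))⁻¹ * (b0 : G) = (p.1.2 : G)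
            calc ((a0:G)⁻¹ * (p.1.1:G))⁻¹ * (b0:G)
                = (p.1.1:G)⁻¹ * ((a0:G) * (b0:G)) := by group
              _ = (p.1.1:G)⁻¹ * ((p.1.1:G) * (p.1.2:G)) := by rw [h1]
              _ = (p.1.2:G) := by group }
  calc Nat.card A * Nat.card B = Nat.card (A × B) := (Nat.card_prod _ _).symm
    _ = Nat.card (Σ g : G, {p : A × B // f p = g}) :=
        Nat.card_congr (Equiv.sigmaFiberEquiv f).symm
    _ = ∑ g : G, Nat.card {p : A × B // f p = g} := by
        rw [Nat.card_eq_fintype_card, Fintype.card_sigma]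
        simp [Nat.card_eq_fintype_card]
    _ = ∑ _g : G, Nat.card ↥(A ⊓ B) := Finset.sum_congr rfl fun g _ => fiber g
    _ = Nat.card G * Nat.card ↥(A ⊓ B) := by
        simp [Finset.sum_const, Finset.card_univ, Nat.card_eq_fintype_card]

lemma unique5 {G : Type*} [Group G] [Finite G] (H P Q : Subgroup G)
    (hH : Nat.card H = 10) (hP : P ≤ H) (hQ : Q ≤ H)
    (hP5 : Nat.card P = 5) (hQ5 : Nat.card Q = 5) : P = Q := by
  by_contra hne
  have hinf : P ⊓ Q = ⊥ := by
    have hd : Nat.card ↥(P ⊓ Q) ∣ 5 := hP5 ▸ Subgroup.card_dvd_of_le inf_le_left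
    rcases (by norm_num : Nat.Prime 5).eq_one_or_self_of_dvd _ hd with h1 | h5
    · exact Subgroup.card_eq_one.mp h1
    · exfalso
      have hPQ : P ⊓ Q = P :=
        Subgroup.eq_of_le_of_card_ge inf_le_left (by rw [hP5, h5])
      have hQP : P ⊓ Q = Q :=
        Subgroup.eq_of_le_of_card_ge inf_le_right (by rw [hQ5, h5])
      exact hne (hPQ ▸ hQP)
  have hinj : Function.Injective (fun p : P × Q => ((p.1 : G) * p.2 : G)) :=
    Subgroup.mul_injective_of_disjoint (disjoint_iff.mpr hinf)
  have hinj2 : Function.Injective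
      (fun p : P × Q => (⟨(p.1 : G) * p.2, mul_mem (hP p.1.2) (hQ p.2.2)⟩ : ↥H)) :=
    fun p q hpq => hinj (congrArg Subtype.val hpq)
  have hle := Nat.card_le_card_of_injective _ hinj2
  rw [Nat.card_prod, hP5, hQ5, hH] at hle
  omega

end Stmt14Aux
namespace Stmt14Aux

lemma cardT : Nat.card (alternatingGroup (Fin 6)) = 360 := by
  rw [Nat.card_eq_fintype_card]
  have h := two_mul_card_alternatingGroup (α := Fin 6)
  have hp : Fintype.card (Equiv.Perm (Fin 6)) = 720 := by
    simp [Fintype.card_perm, Nat.factorial]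
  omega

lemma cardA5 : Nat.card (alternatingGroup (Fin 5)) = 60 := by
  rw [Nat.card_eq_fintype_card]
  have h := two_mul_card_alternatingGroup (α := Fin 5)
  have hp : Fintype.card (Equiv.Perm (Fin 5)) = 120 := by
    simp [Fintype.card_perm, Nat.factorial]
  omega

lemma hfac : (Nat.card (alternatingGroup (Fin 6))).factorization 5 = 1 := by
  rw [cardT, show (360:ℕ) = 5^1 * 72 by norm_num,
    Nat.factorization_mul (by norm_num) (by norm_num),
    Nat.Prime.factorization_pow (by norm_num)]
  simp [Nat.factorization_eq_zero_iff]

end Stmt14Aux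

/-- In `T = A₆`, if `A` and `B` are non-conjugate subgroups isomorphic to `A₅` with
`AB = T`, then `A ∩ B` is self-normalising in `T`. -/
theorem stmt_14 (A B : Subgroup (alternatingGroup (Fin 6)))
    (hA : Nonempty (A ≃* alternatingGroup (Fin 5)))
    (hB : Nonempty (B ≃* alternatingGroup (Fin 5)))
    (hnc : ¬ ∃ g : alternatingGroup (Fin 6), A.map (MulAut.conj g).toMonoidHom = B)
    (hfact : (A : Set (alternatingGroup (Fin 6))) * (B : Set (alternatingGroup (Fin 6)))
      = Set.univ) :
    Subgroup.normalizer ((A ⊓ B : Subgroup (alternatingGroup (Fin 6))) : Set (alternatingGroup (Fin 6))) = A ⊓ B := by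
  classical
  haveI : Fact (Nat.Prime 5) := ⟨by norm_num⟩
  have cardA : Nat.card A = 60 := by
    rw [Nat.card_congr hA.some.toEquiv, Stmt14Aux.cardA5]
  have cardB : Nat.card B = 60 := by
    rw [Nat.card_congr hB.some.toEquiv, Stmt14Aux.cardA5]
  have hH10 : Nat.card ↥(A ⊓ B) = 10 := by
    have h := Stmt14Aux.mul_univ_card A B hfact
    rw [cardA, cardB, Stmt14Aux.cardT] at h
    omega
  -- a subgroup of order 5 inside A ⊓ B
  have h5 : 5 ∣ Fintype.card ↥(A ⊓ B) := by
    rw [← Nat.card_eq_fintype_card, hH10]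
    norm_num
  obtain ⟨x, hx⟩ := exists_prime_orderOf_dvd_card (G := ↥(A ⊓ B)) 5 h5
  set P : Subgroup (alternatingGroup (Fin 6)) :=
    Subgroup.zpowers ((x : ↥(A ⊓ B)) : ↥(alternatingGroup (Fin 6))) with hPdef
  have hPle : P ≤ A ⊓ B := Subgroup.zpowers_le.mpr x.2
  have hPcard : Nat.card P = 5 := by
    rw [hPdef, Nat.card_zpowers, Subgroup.orderOf_coe, hx]
  -- the normalizer of A ⊓ B normalizes P
  have hNP : (Subgroup.normalizer ((A ⊓ B : Subgroup (alternatingGroup (Fin 6))) : Set (alternatingGroup (Fin 6)))) ≤ (Subgroup.normalizer (P : Set (alternatingGroup (Fin 6)))) := by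
    intro n hn
    have hmapcard : Nat.card (Subgroup.map (MulAut.conj n).toMonoidHom P) = 5 := by
      rw [← hPcard]
      exact (Nat.card_congr
        (P.equivMapOfInjective (MulAut.conj n).toMonoidHom (MulAut.conj n).injective).toEquiv).symm
    have hmaple : Subgroup.map (MulAut.conj n).toMonoidHom P ≤ A ⊓ B := by
      rintro y ⟨p, hp, rfl⟩
      exact (Subgroup.mem_normalizer_iff.mp hn p).mp (hPle hp)
    have hmapP : Subgroup.map (MulAut.conj n).toMonoidHom P = P :=
      Stmt14Aux.unique5 (A ⊓ B) _ _ hH10 hmaple hPle hmapcard hPcard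
    rw [Subgroup.mem_normalizer_iff]
    intro h
    constructor
    · intro hh
      have h2 : (MulAut.conj n) h ∈ Subgroup.map (MulAut.conj n).toMonoidHom P :=
        Subgroup.mem_map_of_mem _ hh
      rw [hmapP] at h2
      simpa [MulAut.conj_apply] using h2
    · intro hh
      have h2 : n * h * n⁻¹ ∈ Subgroup.map (MulAut.conj n).toMonoidHom P := hmapP.symm ▸ hh
      obtain ⟨p, hp, hpe⟩ := h2
      have hph : p = h := by
        apply (MulAut.conj n).injective
        simpa [MulAut.conj_apply] using hpe
      exact hph ▸ hp
  -- P is a Sylow 5-subgroup, conjugate to zpowers σ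
  have hσcard : Nat.card (Subgroup.zpowers Stmt14Aux.σ) = 5 := by
    rw [Nat.card_zpowers, Stmt14Aux.horder]
  let Ps : Sylow 5 (alternatingGroup (Fin 6)) :=
    Sylow.ofCard P (by rw [hPcard, Stmt14Aux.hfac, pow_one])
  let P0s : Sylow 5 (alternatingGroup (Fin 6)) :=
    Sylow.ofCard (Subgroup.zpowers Stmt14Aux.σ) (by rw [hσcard, Stmt14Aux.hfac, pow_one])
  obtain ⟨g, hg⟩ := MulAction.exists_smul_eq (alternatingGroup (Fin 6)) P0s Ps
  have hsub : Subgroup.map (MulAut.conj g).toMonoidHom (Subgroup.zpowers Stmt14Aux.σ) = P := by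
    have h2 : ((g • P0s : Sylow 5 ↥(alternatingGroup (Fin 6))) :
        Subgroup ↥(alternatingGroup (Fin 6))) = (Ps : Subgroup ↥(alternatingGroup (Fin 6))) := by
      rw [hg]
    exact h2
  have hcardPnorm : Nat.card (Subgroup.normalizer (P : Set (alternatingGroup (Fin 6)))) = 10 := by
    rw [← hsub, ← Subgroup.map_equiv_normalizer_eq, ← Stmt14Aux.cardNormalizer]
    exact (Nat.card_congr
      (((Subgroup.normalizer ((Subgroup.zpowers Stmt14Aux.σ : Subgroup Stmt14Aux.T) : Set Stmt14Aux.T)).equivMapOfInjective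
        (MulAut.conj g).toMonoidHom (MulAut.conj g).injective).toEquiv)).symm
  have hdvd : Nat.card (Subgroup.normalizer ((A ⊓ B : Subgroup (alternatingGroup (Fin 6))) : Set (alternatingGroup (Fin 6)))) ∣ 10 :=
    hcardPnorm ▸ Subgroup.card_dvd_of_le hNP
  have hdvd2 : 10 ∣ Nat.card (Subgroup.normalizer ((A ⊓ B : Subgroup (alternatingGroup (Fin 6))) : Set (alternatingGroup (Fin 6)))) :=
    hH10 ▸ Subgroup.card_dvd_of_le Subgroup.le_normalizer
  have hcard : Nat.card (Subgroup.normalizer ((A ⊓ B : Subgroup (alternatingGroup (Fin 6))) : Set (alternatingGroup (Fin 6)))) = 10 := Nat.dvd_antisymm hdvd hdvd2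
  exact (Subgroup.eq_of_le_of_card_ge Subgroup.le_normalizer (by rw [hcard, hH10])).symm
end

section
/- Let q be a power of 2, let F = 𝔽_{q⁴} viewed as a 4-dimensional vector space V over 𝔽_q, and define Q : V → 𝔽_q by Q(x) = Tr_{𝔽_{q²}/𝔽_q}(N_{𝔽_{q⁴}/𝔽_{q²}}(x)) = Tr_{𝔽_{q²}/𝔽_q}(x^{q²+1}). Then the map f(x,y) = Q(x+y) + Q(x) + Q(y) is a nondegenerate symmetric 𝔽_q-bilinear form on V. -/
open Polynomial

/-- Let `q = 2^n` and `F = 𝔽_{q⁴}`, and define `Q : F → 𝔽_q` by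
`Q(x) = Tr_{𝔽_{q²}/𝔽_q}(x^{q²+1}) = x^{q²+1} + (x^{q²+1})^q`. Then
`f(x,y) = Q(x+y) + Q(x) + Q(y)` is a nondegenerate symmetric `𝔽_q`-bilinear form on
`F` viewed as a 4-dimensional `𝔽_q`-space (the subfield `𝔽_q` is `{c : c^q = c}`, and
`f` takes values in it). -/
theorem stmt_17 (n : ℕ) (hn : 0 < n) (F : Type*) [Field F] [Fintype F]
    (hF : Fintype.card F = (2 ^ n) ^ 4) :
    let q := 2 ^ n
    let Q : F → F := fun x => x ^ (q ^ 2 + 1) + (x ^ (q ^ 2 + 1)) ^ q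
    let f : F → F → F := fun x y => Q (x + y) + Q x + Q y
    (∀ x y : F, f x y = f y x) ∧
    (∀ x x' y : F, f (x + x') y = f x y + f x' y) ∧
    (∀ x y y' : F, f x (y + y') = f x y + f x y') ∧
    (∀ c x y : F, c ^ q = c → f (c * x) y = c * f x y) ∧
    (∀ c x y : F, c ^ q = c → f x (c * y) = c * f x y) ∧
    (∀ x y : F, (f x y) ^ q = f x y) ∧
    (∀ x : F, (∀ y : F, f x y = 0) → x = 0) := by
  intro q Q f
  have h2 : (2 : F) = 0 := by
    have h := FiniteField.cast_card_eq_zero F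
    rw [hF] at h
    have h' : ((2 : F)) ^ (n * 4) = 0 := by
      push_cast at h; rw [pow_mul]; exact_mod_cast h
    exact pow_eq_zero_iff (by positivity) |>.mp h'
  have hchar : CharP F 2 := by
    have hdvd : ringChar F ∣ 2 := ringChar.dvd (by exact_mod_cast h2)
    have hp : (ringChar F).Prime := CharP.char_is_prime F (ringChar F)
    have : ringChar F = 2 := (Nat.prime_dvd_prime_iff_eq hp Nat.prime_two).mp hdvd
    rw [← this]; exact ringChar.charP F
  haveI : Fact (Nat.Prime 2) := ⟨Nat.prime_two⟩
  have frob : ∀ (a b : F) (k : ℕ), (a + b) ^ q ^ k = a ^ q ^ k + b ^ q ^ k := by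
    intro a b k
    have hq : q ^ k = 2 ^ (n * k) := by simp [q, ← pow_mul]
    rw [hq]
    exact add_pow_char_pow a b 2 (n * k)
  have frob1 : ∀ (a b : F), (a + b) ^ q = a ^ q + b ^ q := by
    intro a b; have := frob a b 1; simpa using this
  have frob2 : ∀ (a b : F), (a + b) ^ q ^ 2 = a ^ q ^ 2 + b ^ q ^ 2 := fun a b => frob a b 2
  have key : ∀ x y : F, f x y =
      x ^ q ^ 2 * y + x * y ^ q ^ 2 + x ^ (q ^ 2 * q) * y ^ q + x ^ q * y ^ (q ^ 2 * q) := by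
    intro x y
    show ((x+y) ^ (q^2+1) + ((x+y) ^ (q^2+1)) ^ q) + (x ^ (q^2+1) + (x ^ (q^2+1)) ^ q)
        + (y ^ (q^2+1) + (y ^ (q^2+1)) ^ q) = _
    rw [pow_succ (x+y) (q^2), pow_succ x (q^2), pow_succ y (q^2), frob2, add_mul, mul_add,
      mul_add, frob1, frob1, frob1]
    simp only [mul_pow, ← pow_mul]
    linear_combination (x ^ (q^2) * x + y ^ (q^2) * y + x ^ (q^2*q) * x ^ q
      + y ^ (q^2*q) * y ^ q) * h2
  have hq1 : 1 < q := Nat.one_lt_two_pow hn.ne'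
  have frob3 : ∀ (a b : F), (a + b) ^ (q ^ 2 * q) = a ^ (q ^ 2 * q) + b ^ (q ^ 2 * q) := by
    intro a b; have := frob a b 3; rwa [pow_succ] at this
  have hq4 : ∀ a : F, a ^ q ^ 4 = a := by
    intro a
    have : q ^ 4 = Fintype.card F := by rw [hF]
    rw [this]; exact FiniteField.pow_card a
  refine ⟨?_, ?_, ?_, ?_, ?_, ?_, ?_⟩
  · intro x y; rw [key, key]; ring
  · intro x x' y; rw [key, key, key, frob2, frob1, frob3]; ring
  · intro x y y'; rw [key, key, key, frob2, frob1, frob3]; ring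
  · intro c x y hc
    have hc2 : c ^ q ^ 2 = c := by rw [pow_two, pow_mul, hc, hc]
    have hc3 : c ^ (q ^ 2 * q) = c := by rw [pow_mul, hc2, hc]
    rw [key, key]; simp only [mul_pow, hc, hc2, hc3]; ring
  · intro c x y hc
    have hc2 : c ^ q ^ 2 = c := by rw [pow_two, pow_mul, hc, hc]
    have hc3 : c ^ (q ^ 2 * q) = c := by rw [pow_mul, hc2, hc]
    rw [key, key]; simp only [mul_pow, hc, hc2, hc3]; ring
  · intro x y
    rw [key, frob1, frob1, frob1]
    simp only [mul_pow, ← pow_mul]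
    rw [show q ^ 2 * q * q = q ^ 4 by ring, hq4 x, hq4 y]
    ring
  · intro x hx
    classical
    set p : F[X] := C (x ^ q ^ 2) * X + C x * X ^ q ^ 2 + C (x ^ (q ^ 2 * q)) * X ^ q
      + C (x ^ q) * X ^ (q ^ 2 * q) with hp
    have heval : ∀ y : F, p.eval y = 0 := by
      intro y
      have := hx y
      rw [key] at this
      simpa [hp] using this
    have hdeg : p.natDegree < Fintype.card F := by
      rw [hF]
      have h1 : p.natDegree ≤ q ^ 2 * q := by
        have b1 : (C (x ^ q ^ 2) * X).natDegree ≤ q ^ 2 * q :=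
          (natDegree_C_mul_le _ _).trans (by rw [natDegree_X]; nlinarith)
        have b2 : (C x * X ^ q ^ 2).natDegree ≤ q ^ 2 * q :=
          (natDegree_C_mul_le _ _).trans (by rw [natDegree_X_pow]; nlinarith)
        have b3 : (C (x ^ (q ^ 2 * q)) * X ^ q).natDegree ≤ q ^ 2 * q :=
          (natDegree_C_mul_le _ _).trans (by rw [natDegree_X_pow]; nlinarith)
        have b4 : (C (x ^ q) * X ^ (q ^ 2 * q)).natDegree ≤ q ^ 2 * q :=
          (natDegree_C_mul_le _ _).trans (by rw [natDegree_X_pow])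
        exact le_trans (natDegree_add_le _ _) (max_le (le_trans (natDegree_add_le _ _)
          (max_le (le_trans (natDegree_add_le _ _) (max_le b1 b2)) b3)) b4)
      calc p.natDegree ≤ q ^ 2 * q := h1
        _ < (2 ^ n) ^ 4 := by
          have : q ^ 2 * q = q ^ 3 := by ring
          rw [this]
          exact pow_lt_pow_right₀ hq1 (by norm_num)
    have hp0 : p = 0 :=
      Polynomial.eq_zero_of_natDegree_lt_card_of_eval_eq_zero p Function.injective_id
        (fun y => heval y) hdeg
    have hcoeff : p.coeff 1 = x ^ q ^ 2 := by
      rw [hp]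
      simp only [coeff_add, coeff_C_mul, coeff_X_pow, coeff_X_one, mul_one]
      rw [if_neg (by nlinarith), if_neg (by nlinarith), if_neg (by nlinarith)]
      ring
    rw [hp0] at hcoeff
    simp only [coeff_zero] at hcoeff
    exact pow_eq_zero_iff (by positivity) |>.mp hcoeff.symm
end

section
/- Let q be a power of 2 and V = 𝔽_{q⁴} as an 𝔽_q-vector space with the bilinear form f(x,y) = Q(x+y)+Q(x)+Q(y) where Q(x) = Tr_{𝔽_{q²}/𝔽_q}(x^{q²+1}). For a ∈ 𝔽_{q⁴}^*, the multiplication map s_a : x ↦ xa preserves f if and only if a^{q²+1} = 1. Consequently {a ∈ 𝔽_{q⁴}^* : s_a preserves f} is a cyclic group of order q² + 1. -/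
/-- With `q = 2^n`, `F = 𝔽_{q⁴}`, `Q(x) = x^{q²+1} + (x^{q²+1})^q` and
`f(x,y) = Q(x+y) + Q(x) + Q(y)`: for `a ∈ F^*`, multiplication `s_a : x ↦ xa`
preserves `f` if and only if `a^{q²+1} = 1`; consequently the set of such `a` is a
cyclic group of order `q² + 1`. -/
theorem stmt_18 (n : ℕ) (hn : 0 < n) (F : Type*) [Field F] [Fintype F]
    (hF : Fintype.card F = (2 ^ n) ^ 4) :
    let q := 2 ^ n
    let Q : F → F := fun x => x ^ (q ^ 2 + 1) + (x ^ (q ^ 2 + 1)) ^ q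
    let f : F → F → F := fun x y => Q (x + y) + Q x + Q y
    (∀ a : F, a ≠ 0 →
      ((∀ x y : F, f (x * a) (y * a) = f x y) ↔ a ^ (q ^ 2 + 1) = 1)) ∧
    (∃ z : F, z ^ (q ^ 2 + 1) = 1 ∧ orderOf z = q ^ 2 + 1 ∧
      ∀ a : F, a ≠ 0 →
        ((∀ x y : F, f (x * a) (y * a) = f x y) ↔ ∃ k : ℕ, a = z ^ k)) := by
  intro q Q f
  classical
  have hq : q = 2 ^ n := rfl
  have hq2 : 2 ≤ q := by
    rw [hq]; calc 2 = 2^1 := rfl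
    _ ≤ 2 ^ n := Nat.pow_le_pow_right (by norm_num) hn
  -- characteristic 2
  have h2 : (2 : F) = 0 := by
    have := FiniteField.cast_card_eq_zero F
    rw [hF] at this
    push_cast at this
    rw [← pow_mul] at this
    exact pow_eq_zero_iff (by omega : n * 4 ≠ 0) |>.mp this
  have hchar2 : CharP F 2 := by
    apply ringChar.of_eq
    have hdvd : ringChar F ∣ 2 := (CharP.cast_eq_zero_iff F (ringChar F) 2).mp h2
    rcases (Nat.dvd_prime Nat.prime_two).mp hdvd with h | h
    · exact absurd h (CharP.ringChar_ne_one)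
    · exact h
  have hfrob : ∀ m : ℕ, ∀ x y : F, (x + y) ^ (2 ^ m) = x ^ (2 ^ m) + y ^ (2 ^ m) := by
    intro m x y; exact add_pow_char_pow ..
  have hfrobq : ∀ x y : F, (x + y) ^ q = x ^ q + y ^ q := fun x y => hq ▸ hfrob n x y
  have hfrobq2 : ∀ x y : F, (x + y) ^ (q ^ 2) = x ^ (q ^ 2) + y ^ (q ^ 2) := by
    intro x y
    have : q ^ 2 = 2 ^ (n * 2) := by rw [hq, pow_mul]
    rw [this]; exact hfrob (n * 2) x y
  have hself : ∀ t : F, t + t = 0 := by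
    intro t; have : (2 : F) * t = 0 := by rw [h2, zero_mul]
    linear_combination this
  -- B identity
  set B : F → F → F := fun x y => x ^ (q ^ 2) * y + x * y ^ (q ^ 2) with hB
  have hfB : ∀ x y : F, f x y = B x y + (B x y) ^ q := by
    intro x y
    show Q (x + y) + Q x + Q y = _
    have e1 : (x + y) ^ (q ^ 2 + 1) = x ^ (q ^ 2 + 1) + y ^ (q ^ 2 + 1) + B x y := by
      rw [pow_succ, hfrobq2, pow_succ, pow_succ]
      simp only [hB]; ring
    show (x+y) ^ (q^2+1) + ((x+y)^(q^2+1))^q + (x^(q^2+1) + (x^(q^2+1))^q)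
        + (y^(q^2+1) + (y^(q^2+1))^q) = B x y + (B x y) ^ q
    rw [e1, hfrobq, hfrobq]
    have h1 := hself (x ^ (q^2+1)); have h2' := hself (y ^ (q^2+1))
    have h3 := hself ((x ^ (q^2+1))^q); have h4 := hself ((y ^ (q^2+1))^q)
    linear_combination h1 + h2' + h3 + h4
  have hBmul : ∀ a x y : F, B (x * a) (y * a) = a ^ (q ^ 2 + 1) * B x y := by
    intro a x y; simp only [hB, mul_pow, pow_succ]; ring
  -- key iff
  have key : ∀ a : F, a ≠ 0 →
      ((∀ x y : F, f (x * a) (y * a) = f x y) ↔ a ^ (q ^ 2 + 1) = 1) := by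
    intro a ha
    constructor
    · intro h
      by_contra hN
      set N := a ^ (q ^ 2 + 1) with hNdef
      -- the equation for all t in range of g
      have hEq : ∀ y : F, N * (y + y ^ (q ^ 2)) + N ^ q * (y + y ^ (q ^ 2)) ^ q
          = (y + y ^ (q ^ 2)) + (y + y ^ (q ^ 2)) ^ q := by
        intro y
        have := h 1 y
        rw [hfB, hfB, hBmul] at this
        have hB1 : B 1 y = y + y ^ (q ^ 2) := by simp [hB]
        rw [hB1] at this
        rw [mul_pow] at this
        exact this
      set p : Polynomial F := Polynomial.C (N + 1) * Polynomial.X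
        + Polynomial.C (N ^ q + 1) * Polynomial.X ^ q with hpdef
      have hproot : ∀ y : F, p.eval (y + y ^ (q ^ 2)) = 0 := by
        intro y
        set t := y + y ^ (q ^ 2)
        have := hEq y
        simp only [hpdef, Polynomial.eval_add, Polynomial.eval_mul, Polynomial.eval_C,
          Polynomial.eval_X, Polynomial.eval_pow]
        linear_combination this + hself (N * t + t) + hself (N ^ q * t ^ q + t ^ q)
          - hself (N * t) - hself (N ^ q * t ^ q)
      have hpne : p ≠ 0 := by
        intro h0
        apply hN
        have hc : p.coeff 1 = N + 1 := by
          rw [hpdef, Polynomial.coeff_add, Polynomial.coeff_C_mul, Polynomial.coeff_C_mul,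
            Polynomial.coeff_X_one, Polynomial.coeff_X_pow, if_neg (by omega : ¬ 1 = q)]
          ring
        rw [h0] at hc
        simp at hc
        linear_combination -hc - hself 1
      have hpdeg : p.natDegree ≤ q := by
        apply Polynomial.natDegree_add_le_of_degree_le
        · exact le_trans (Polynomial.natDegree_C_mul_le _ _)
            (by simp only [Polynomial.natDegree_X]; omega)
        · exact le_trans (Polynomial.natDegree_C_mul_le _ _)
            (by simp [Polynomial.natDegree_X_pow])
      -- roots bound
      have hrootsbound : (Finset.univ.filter (fun t : F => p.eval t = 0)).card ≤ q := by
        have h1 : (Finset.univ.filter (fun t : F => p.eval t = 0)) ⊆ p.roots.toFinset := by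
          intro t ht
          simp only [Finset.mem_filter] at ht
          simp [Polynomial.mem_roots, hpne, ht.2]
        calc (Finset.univ.filter (fun t : F => p.eval t = 0)).card
            ≤ p.roots.toFinset.card := Finset.card_le_card h1
          _ ≤ Multiset.card p.roots := Multiset.toFinset_card_le _
          _ ≤ p.natDegree := Polynomial.card_roots' p
          _ ≤ q := hpdeg
      -- image bound
      set g : F → F := fun y => y + y ^ (q ^ 2) with hg
      have himg : q ^ 2 ≤ (Finset.univ.image g).card := by
        have hfib : ∀ b ∈ Finset.univ.image g,
            (Finset.univ.filter (fun y : F => g y = b)).card ≤ q ^ 2 := by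
          intro b _
          set r : Polynomial F := Polynomial.X ^ (q ^ 2) + Polynomial.X - Polynomial.C b
            with hrdef
          have hrne : r ≠ 0 := by
            intro h0
            have : r.coeff (q ^ 2) = 1 := by
              rw [hrdef, Polynomial.coeff_sub, Polynomial.coeff_add, Polynomial.coeff_X_pow,
                if_pos rfl, Polynomial.coeff_X, if_neg (by nlinarith : ¬ 1 = q ^ 2),
                Polynomial.coeff_C, if_neg (pow_ne_zero 2 (by omega : q ≠ 0) : q ^ 2 ≠ 0)]
              ring
            rw [h0] at this; simp at this
          have hq2one : 1 ≤ q ^ 2 := Nat.one_le_iff_ne_zero.mpr (pow_ne_zero 2 (by omega))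
          have hrdeg : r.natDegree ≤ q ^ 2 := by
            apply le_trans (Polynomial.natDegree_sub_le _ _)
            simp only [max_le_iff, Polynomial.natDegree_C]
            refine ⟨le_trans (Polynomial.natDegree_add_le _ _) ?_, Nat.zero_le _⟩
            simp only [Polynomial.natDegree_X_pow, Polynomial.natDegree_X, max_le_iff]
            exact ⟨le_rfl, hq2one⟩
          have hsub : (Finset.univ.filter (fun y : F => g y = b)) ⊆ r.roots.toFinset := by
            intro y hy
            simp only [Finset.mem_filter] at hy
            have : r.eval y = 0 := by
              simp only [hrdef, Polynomial.eval_sub, Polynomial.eval_add,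
                Polynomial.eval_pow, Polynomial.eval_X, Polynomial.eval_C]
              rw [← hy.2]; simp [hg]; ring
            simp [Polynomial.mem_roots, hrne, this]
          calc (Finset.univ.filter (fun y : F => g y = b)).card
              ≤ r.roots.toFinset.card := Finset.card_le_card hsub
            _ ≤ Multiset.card r.roots := Multiset.toFinset_card_le _
            _ ≤ r.natDegree := Polynomial.card_roots' r
            _ ≤ q ^ 2 := hrdeg
        have h4 := Finset.card_le_mul_card_image (f := g) Finset.univ (q ^ 2) hfib
        rw [Finset.card_univ, hF, ← hq] at h4
        have hq4 : q ^ 4 = q ^ 2 * q ^ 2 := by ring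
        rw [hq4] at h4
        exact Nat.le_of_mul_le_mul_left h4 (by positivity)
      -- image ⊆ roots
      have hsub2 : Finset.univ.image g ⊆ Finset.univ.filter (fun t : F => p.eval t = 0) := by
        intro t ht
        simp only [Finset.mem_image] at ht
        obtain ⟨y, _, rfl⟩ := ht
        simp only [Finset.mem_filter, Finset.mem_univ, true_and]
        exact hproot y
      have h5 : q ^ 2 ≤ q := le_trans himg (le_trans (Finset.card_le_card hsub2) hrootsbound)
      rw [pow_two] at h5
      have h6 : 2 * q ≤ q * q := Nat.mul_le_mul_right q hq2
      have h7 : 2 * q ≤ q := le_trans h6 h5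
      omega
    · intro hN x y
      rw [hfB, hfB, hBmul, hN, one_mul]
  refine ⟨key, ?_⟩
  -- cyclic part
  obtain ⟨g, hgen⟩ := IsCyclic.exists_generator (α := Fˣ)
  have horderg : orderOf g = q ^ 4 - 1 := by
    rw [orderOf_eq_card_of_forall_mem_zpowers hgen, Nat.card_units,
      Nat.card_eq_fintype_card, hF, hq]
  set ζ : Fˣ := g ^ (q ^ 2 - 1) with hζ
  have hq2one : 1 ≤ q ^ 2 := Nat.one_le_iff_ne_zero.mpr (pow_ne_zero 2 (by omega))
  have hfact : q ^ 4 - 1 = (q ^ 2 - 1) * (q ^ 2 + 1) := by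
    obtain ⟨m, hm⟩ : ∃ m, q ^ 2 = m + 1 := ⟨q ^ 2 - 1, by omega⟩
    have hq4 : q ^ 4 = q ^ 2 * q ^ 2 := by ring
    rw [hq4, hm, Nat.add_sub_cancel]
    have he : (m + 1) * (m + 1) = m * (m + 1 + 1) + 1 := by ring
    rw [he, Nat.add_sub_cancel]
  have horderζ : orderOf ζ = q ^ 2 + 1 := by
    have h4 : 4 ≤ q ^ 2 := by rw [pow_two]; exact Nat.mul_le_mul hq2 hq2
    rw [hζ, orderOf_pow, horderg, hfact]
    rw [Nat.gcd_eq_right ⟨q ^ 2 + 1, rfl⟩]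
    rw [Nat.mul_div_cancel_left _ (by omega)]
  set z : F := (ζ : F) with hz
  have horderz : orderOf z = q ^ 2 + 1 := by rw [hz, orderOf_units, horderζ]
  have hz1 : z ^ (q ^ 2 + 1) = 1 := by rw [← horderz]; exact pow_orderOf_eq_one z
  refine ⟨z, hz1, horderz, ?_⟩
  intro a ha
  rw [key a ha]
  constructor
  · intro hN
    -- counting argument
    set T : Finset F := Finset.univ.filter (fun b : F => b ^ (q ^ 2 + 1) = 1) with hT
    set Z : Finset F := (Finset.range (q ^ 2 + 1)).image (fun k => z ^ k) with hZ
    have hZT : Z ⊆ T := by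
      intro b hb
      simp only [hZ, Finset.mem_image, Finset.mem_range] at hb
      obtain ⟨k, _, rfl⟩ := hb
      simp only [hT, Finset.mem_filter, Finset.mem_univ, true_and]
      rw [← pow_mul, mul_comm, pow_mul, hz1, one_pow]
    have hcardZ : Z.card = q ^ 2 + 1 := by
      rw [hZ, Finset.card_image_of_injOn, Finset.card_range]
      intro i hi j hj hij
      simp only [Finset.coe_range, Set.mem_Iio] at hi hj
      have : ζ ^ i = ζ ^ j := by
        apply Units.ext
        simpa [hz] using hij
      exact pow_injOn_Iio_orderOf (by rwa [horderζ]) (by rwa [horderζ]) this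
    have hcardT : T.card ≤ q ^ 2 + 1 := by
      set r : Polynomial F := Polynomial.X ^ (q ^ 2 + 1) - 1 with hrdef
      have hrne : r ≠ 0 := by
        intro h0
        have : r.coeff (q ^ 2 + 1) = 1 := by
          rw [hrdef, Polynomial.coeff_sub, Polynomial.coeff_X_pow, if_pos rfl,
            Polynomial.coeff_one, if_neg (by omega : ¬ q ^ 2 + 1 = 0)]
          ring
        rw [h0] at this; simp at this
      have hsub : T ⊆ r.roots.toFinset := by
        intro b hb
        simp only [hT, Finset.mem_filter] at hb
        have : r.eval b = 0 := by
          simp [hrdef, hb.2]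
        simp [Polynomial.mem_roots, hrne, this]
      calc T.card ≤ r.roots.toFinset.card := Finset.card_le_card hsub
        _ ≤ Multiset.card r.roots := Multiset.toFinset_card_le _
        _ ≤ r.natDegree := Polynomial.card_roots' r
        _ ≤ q ^ 2 + 1 := by
            apply le_trans (Polynomial.natDegree_sub_le _ _)
            simp
    have heq : Z = T := Finset.eq_of_subset_of_card_le hZT (le_trans hcardT hcardZ.ge)
    have haT : a ∈ T := by
      simp only [hT, Finset.mem_filter, Finset.mem_univ, true_and]; exact hN
    rw [← heq] at haT
    have := haT
    simp only [hZ, Finset.mem_image, Finset.mem_range] at this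
    obtain ⟨k, _, hk⟩ := this
    exact ⟨k, hk.symm⟩
  · rintro ⟨k, rfl⟩
    rw [← pow_mul, mul_comm, pow_mul, hz1, one_pow]
end
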